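/- Let (A, ∗) be a monoidal stable category with a t-structure of finite homological dimension δ₁, such that the monoidal product is exact enough that the following makes sense, and let A be an associative algebra object of A with unit map 1_A → A. Suppose: A is connective-zero (lies in cohomological degrees ≥ 0) and right flat (A ∗ − is left t-exact); the cofiber J[1] := cofib(1_A → A) lies in degrees ≥ 0, is right flat, and is bounded above (lies in degrees ≤ δ₂ when shifted: J := fib(1_A → A) lies in degrees [1, δ₂+1]). Then for every i, the map J^{∗(i+δ₁+δ₂+2)} → J^{∗(i+1)} is nullhomotopic; equivalently, the tower i ↦ cofib(1_A → Tot^i A^{∗(•+1)}) ≅ J^{∗(i+1)}[1] is (δ₁+δ₂+1)-nilpotent, so the monad defined by A is effective (the augmented cobar/totalization tower of the bar construction converges with uniform nilpotence). -/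

import Mathlib

/-!
The composite of `n` transition maps out of `J^{⊗(i+n)}` is `J^{⊗i}` whiskered with the
iterated counit `J^{⊗n} ⟶ 𝟙`.  For `i ≥ 1` it therefore factors through
`J ⊗ J^{⊗n} ⟶ J`, a map from degrees `≥ n + 1` to degrees `≤ δ₂ + 1`; for
`n = δ₁ + δ₂ + 1` the gap exceeds the homological dimension `δ₁`, so this map is zero.
-/

open CategoryTheory CategoryTheory.Limits MonoidalCategory

universe v u

/-- The composite `X (i+n) ⟶ X i` of the transition maps of a tower. -/
def towerComp {C : Type u} [Category.{v} C] {X : ℕ → C}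
    (f : ∀ i, X (i + 1) ⟶ X i) (i : ℕ) : ∀ n : ℕ, (X (i + n) ⟶ X i)
  | 0 => 𝟙 (X i)
  | n + 1 => f (i + n) ≫ towerComp f i n

/-- Monoidal powers `J^{⊗ m}` of an object `J` (with `J^{⊗0}` the unit). -/
def monPow {C : Type u} [Category.{v} C] [MonoidalCategory C] (J : C) : ℕ → C
  | 0 => 𝟙_ C
  | m + 1 => monPow J m ⊗ J

/-- The transition maps `J^{⊗(m+1)} ⟶ J^{⊗m}` induced by a map `ε : J ⟶ 𝟙` (the inclusion
of the fiber `J = fib(𝟙 → A)` into the unit). -/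
def monPowStep {C : Type u} [Category.{v} C] [MonoidalCategory C] (J : C) (ε : J ⟶ 𝟙_ C) :
    ∀ m : ℕ, monPow J (m + 1) ⟶ monPow J m :=
  fun m => (monPow J m ◁ ε) ≫ (ρ_ (monPow J m)).hom

section MonoidalPowers

variable {C : Type u} [Category.{v} C] [MonoidalCategory C] (J : C) (ε : J ⟶ 𝟙_ C)

def monPowAddIso (i : ℕ) : ∀ n : ℕ, monPow J (i + n) ≅ monPow J i ⊗ monPow J n
  | 0 => (ρ_ (monPow J i)).symm
  | n + 1 => whiskerRightIso (monPowAddIso i n) J ≪≫ α_ _ _ _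

def monPowToUnit : ∀ n : ℕ, monPow J n ⟶ 𝟙_ C
  | 0 => 𝟙 _
  | n + 1 => monPowStep J ε n ≫ monPowToUnit n

lemma monPowStep_comp_monPowAddIso_hom (i n : ℕ) :
    monPowStep J ε (i + n) ≫ (monPowAddIso J i n).hom
      = (monPowAddIso J i (n + 1)).hom ≫ (monPow J i ◁ monPowStep J ε n) := by
  change (_ ◁ ε ≫ (ρ_ _).hom) ≫ _
    = ((monPowAddIso J i n).hom ▷ J ≫ (α_ _ _ _).hom) ≫ _ ◁ (_ ◁ ε ≫ (ρ_ _).hom)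
  rw [Category.assoc, ← rightUnitor_naturality, whisker_exchange_assoc, tensor_whiskerLeft]
  simp

lemma towerComp_monPowStep (i : ℕ) : ∀ n : ℕ,
    towerComp (monPowStep J ε) i n
      = (monPowAddIso J i n).hom ≫ (monPow J i ◁ monPowToUnit J ε n) ≫ (ρ_ (monPow J i)).hom
  | 0 => by simp [towerComp, monPowAddIso, monPowToUnit, monPow]
  | n + 1 => by
    rw [towerComp, towerComp_monPowStep i n,
      reassoc_of% monPowStep_comp_monPowAddIso_hom, monPowToUnit, whiskerLeft_comp_assoc]

lemma towerComp_monPowStep_succ_eq_zero [Preadditive C] [MonoidalPreadditive C] {n : ℕ}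
    (h : J ◁ monPowToUnit J ε n = 0) (i : ℕ) :
    towerComp (monPowStep J ε) (i + 1) n = 0 := by
  have hwhisker : monPow J (i + 1) ◁ monPowToUnit J ε n = 0 := by
    change (monPow J i ⊗ J) ◁ _ = 0
    rw [tensor_whiskerLeft, h, MonoidalPreadditive.whiskerLeft_zero, zero_comp, comp_zero]
  rw [towerComp_monPowStep, hwhisker, zero_comp, comp_zero]

lemma monPow_mem (Ge : ℤ → Set C)
    (htens : ∀ (a b : ℤ) (X Y : C), X ∈ Ge a → Y ∈ Ge b → (X ⊗ Y) ∈ Ge (a + b))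
    (hunit : 𝟙_ C ∈ Ge 0) {a : ℤ} (hJ : J ∈ Ge a) : ∀ m : ℕ, monPow J m ∈ Ge (m * a)
  | 0 => by simpa [monPow] using hunit
  | m + 1 => by simpa [monPow, add_mul] using htens _ _ _ _ (monPow_mem Ge htens hunit hJ m) hJ

end MonoidalPowers

theorem stmt_14_general {C : Type u} [Category.{v} C] [Preadditive C] [MonoidalCategory C]
    [MonoidalPreadditive C]
    (Ge Le : ℤ → Set C) (δ₁ δ₂ : ℕ)
    (hvanish : ∀ (a b : ℤ) (X Y : C), X ∈ Ge a → Y ∈ Le b → (δ₁ : ℤ) < a - b →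
      ∀ φ : X ⟶ Y, φ = 0)
    (htens : ∀ (a b : ℤ) (X Y : C), X ∈ Ge a → Y ∈ Ge b → (X ⊗ Y) ∈ Ge (a + b))
    (hunit : 𝟙_ C ∈ Ge 0)
    (J : C) (ε : J ⟶ 𝟙_ C)
    (hJge : J ∈ Ge 1) (hJle : J ∈ Le ((δ₂ : ℤ) + 1)) :
    ∀ i : ℕ, towerComp (monPowStep J ε) (i + 1) (δ₁ + δ₂ + 1) = 0 := by
  intro i
  apply towerComp_monPowStep_succ_eq_zero
  have hsource : J ⊗ monPow J (δ₁ + δ₂ + 1) ∈ Ge (1 + (δ₁ + δ₂ + 1 : ℕ)) := by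
    simpa using htens _ _ _ _ hJge (monPow_mem J Ge htens hunit hJge (δ₁ + δ₂ + 1))
  rw [← cancel_mono (ρ_ J).hom, zero_comp]
  exact hvanish _ _ _ _ hsource hJle (by push_cast; omega) _

/-- **Lemma \ref{l:effmonad-tstr}** (`t`-structures and effective monads): let `(A, ∗)` be a
monoidal stable category equipped with a `t`-structure of finite homological dimension `δ₁`
(modelled by classes `Ge a` = "degrees ≥ a" and `Le b` = "degrees ≤ b", with
`Hom(X, Y) = 0` whenever `X ∈ Ge a`, `Y ∈ Le b` and `a - b > δ₁`, the unit in degrees `≥ 0`,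
and the monoidal product adding lower degree bounds — this last encodes connectivity plus
(right) flatness of `A` and of `cofib(𝟙 → A)`).  Let `A` be an algebra whose unit map has
fiber `J := fib(𝟙_A → A)` lying in degrees `[1, δ₂ + 1]` (i.e. `cofib(𝟙 → A)` lies in
degrees `[0, δ₂]` and is bounded above).  Then for every `i`, the map
`J^{∗(i+δ₁+δ₂+2)} ⟶ J^{∗(i+1)}` (induced by `ε : J ⟶ 𝟙`) is nullhomotopic; equivalently the
tower `i ↦ cofib(𝟙 → Tot^i A^{∗(•+1)}) ≅ J^{∗(i+1)}[1]` is `(δ₁+δ₂+1)`-nilpotent, so the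
monad defined by `A` is effective. -/
theorem stmt_14 {C : Type u} [Category.{v} C] [Preadditive C] [MonoidalCategory C]
    [MonoidalPreadditive C]
    (Ge Le : ℤ → Set C) (δ₁ δ₂ : ℕ)
    (hGeMono : ∀ {a b : ℤ}, a ≤ b → Ge b ⊆ Ge a)
    (hLeMono : ∀ {a b : ℤ}, a ≤ b → Le a ⊆ Le b)
    (hvanish : ∀ (a b : ℤ) (X Y : C), X ∈ Ge a → Y ∈ Le b → (δ₁ : ℤ) < a - b →
      ∀ φ : X ⟶ Y, φ = 0)
    (htens : ∀ (a b : ℤ) (X Y : C), X ∈ Ge a → Y ∈ Ge b → (X ⊗ Y) ∈ Ge (a + b))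
    (hunit : 𝟙_ C ∈ Ge 0)
    (J : C) (ε : J ⟶ 𝟙_ C)
    (hJge : J ∈ Ge 1) (hJle : J ∈ Le ((δ₂ : ℤ) + 1)) :
    ∀ i : ℕ, towerComp (monPowStep J ε) (i + 1) (δ₁ + δ₂ + 1) = 0 :=
  stmt_14_general Ge Le δ₁ δ₂ hvanish htens hunit J ε hJge hJle
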